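/- Let k, N be natural numbers with 1 ≤ k < N, n := N − k, and assume kn ≥ 4. Then in Λ(V): 2 · Σ_{m=1}^{k} Σ_{i ≠ j} (tr Φ)^{kn−4} ∧ ω^{mm} ∧ ω^{mm} ∧ ω^{ij} ∧ ω^{ji} = (kn−4)! · k · n · (k−1) · [−4(n−1)(n−2) − 2n(n−1)(k−2)] · T, where the inner sum is over ordered pairs (i,j) with 1 ≤ i, j ≤ k and i ≠ j. (This is the evaluation of Q₂ = 2 Σ_m Σ_{i≠j} ∫Dψ (tr Φ)^{kN−k²−4} (ω^{mm})² ω^{ij} ω^{ji}.) -/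

import Mathlib

noncomputable section

/-- The real vector space with basis `ψ_s^j` (inl) and `ψ̄_s^j` (inr),
    `1 ≤ s ≤ n`, `1 ≤ j ≤ k`. -/
abbrev V (k n : ℕ) : Type := ((Fin n × Fin k) ⊕ (Fin n × Fin k)) → ℝ

/-- The fermionic variable `ψ_s^j` as a degree-1 element of the exterior algebra. -/
def ψ (k n : ℕ) (s : Fin n) (j : Fin k) : ExteriorAlgebra ℝ (V k n) :=
  ExteriorAlgebra.ι ℝ (Pi.single (Sum.inl (s, j)) (1 : ℝ))

/-- The fermionic variable `ψ̄_s^j` as a degree-1 element of the exterior algebra. -/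
def ψb (k n : ℕ) (s : Fin n) (j : Fin k) : ExteriorAlgebra ℝ (V k n) :=
  ExteriorAlgebra.ι ℝ (Pi.single (Sum.inr (s, j)) (1 : ℝ))

/-- `ω^{ij} = ∑_{s=1}^n ψ_s^i ∧ ψ̄_s^j`. -/
def ω (k n : ℕ) (i j : Fin k) : ExteriorAlgebra ℝ (V k n) :=
  ∑ s : Fin n, ψ k n s i * ψb k n s j

/-- `tr Φ = ∑_{i=1}^k ω^{ii}`. -/
def trPhi (k n : ℕ) : ExteriorAlgebra ℝ (V k n) :=
  ∑ i : Fin k, ω k n i i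

/-- `tr(Φ²) = ∑_{i,j=1}^k ω^{ij} ∧ ω^{ji}`. -/
def trPhi2 (k n : ℕ) : ExteriorAlgebra ℝ (V k n) :=
  ∑ i : Fin k, ∑ j : Fin k, ω k n i j * ω k n j i

/-- The top-degree generator `T = ∧_{s=1}^n (ψ_s^1 ∧ ψ̄_s^1 ∧ ⋯ ∧ ψ_s^k ∧ ψ̄_s^k)`. -/
def T (k n : ℕ) : ExteriorAlgebra ℝ (V k n) :=
  ((List.finRange n).map (fun s =>
    ((List.finRange k).map (fun j => ψ k n s j * ψb k n s j)).prod)).prod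

/-!
The bilinears `ψ_p ψ̄_q` (over the `kn` positions `p = (s, i)`) generate a commutative
subalgebra of `Λ(V)` in which the diagonal ones `D_p = ψ_p ψ̄_p` square to zero and
`tr Φ = ∑_p D_p`. For such a square-zero family, `(∑ D)^(kn - |Q|)` times an element annihilated
by every `D_q`, `q ∈ Q`, only sees the `D_p` with `p ∉ Q`: it equals `(kn - |Q|)! ∏_{p ∉ Q} D_p`
times that element, and vanishes as soon as one more factor `D_p` is present.

In `ω^{ij} ω^{ji} = ∑_{s,t} ψ_s^i ψ̄_s^j ψ_t^j ψ̄_t^i` (with `i ≠ j`) a term with `s ≠ t` is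
annihilated by the four distinct `D_q`, `q ∈ {(s,i), (s,j), (t,i), (t,j)}`, so it is killed by
`(tr Φ)^(kn-4) ω^{mm}`. The term `s = t` equals `-D_{(s,i)} D_{(s,j)}`, and
`(tr Φ)^(kn-4) (ω^{mm})² D_{(s,i)} D_{(s,j)}` is `(kn-4)! T` times the number of ordered pairs
of distinct rows `s₁ ≠ s₂` with `(s₁,m), (s₂,m) ∉ {(s,i), (s,j)}`.
-/

open Finset

section SquareZero

variable {R : Type*} [CommSemiring R]

theorem add_pow_mul_of_mul_eq_zero {u v y : R} (hv : v * y = 0) (r : ℕ) :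
    (u + v) ^ r * y = u ^ r * y := by
  induction r with
  | zero => simp
  | succ r ih =>
    calc (u + v) ^ (r + 1) * y = u ^ (r + 1) * y + u ^ r * (v * y) := by
          rw [pow_succ, mul_right_comm, ih]; ring
      _ = u ^ (r + 1) * y := by rw [hv, mul_zero, add_zero]

theorem add_pow_succ_of_mul_self_eq_zero {x y : R} (hx : x * x = 0) (r : ℕ) :
    (x + y) ^ (r + 1) = y ^ (r + 1) + (r + 1) * (x * y ^ r) := by
  induction r with
  | zero => simp [add_comm]
  | succ r ih =>
    calc (x + y) ^ (r + 2)
        _ = y ^ (r + 2) + (r + 2) * (x * y ^ (r + 1)) + (r + 1) * (x * x) * y ^ r := by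
          rw [pow_succ, ih]; ring
        _ = _ := by rw [hx]; push_cast; ring

variable {ι : Type*} (D : ι → R)

theorem sum_pow_eq_zero_of_card_lt (hD : ∀ p, D p * D p = 0) (U : Finset ι) {r : ℕ}
    (hr : #U < r) : (∑ p ∈ U, D p) ^ r = 0 := by
  classical
  refine pow_eq_zero_of_le hr ?_
  clear hr
  induction U using Finset.induction_on with
  | empty => simp
  | insert a U ha ih =>
    rw [sum_insert ha, card_insert_of_notMem ha, add_pow_succ_of_mul_self_eq_zero (hD a),
      pow_succ, ih, zero_mul, mul_zero, mul_zero, add_zero]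

theorem sum_pow_card (hD : ∀ p, D p * D p = 0) (U : Finset ι) :
    (∑ p ∈ U, D p) ^ #U = (#U).factorial * ∏ p ∈ U, D p := by
  classical
  induction U using Finset.induction_on with
  | empty => simp
  | insert a U ha ih =>
    rw [sum_insert ha, card_insert_of_notMem ha, add_pow_succ_of_mul_self_eq_zero (hD a), ih,
      sum_pow_eq_zero_of_card_lt D hD U (Nat.lt_succ_self _), prod_insert ha,
      Nat.factorial_succ]
    push_cast; ring

theorem sum_pow_mul_eq_sum_compl_pow_mul [Fintype ι] [DecidableEq ι] {Q : Finset ι} {Y : R}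
    (hY : ∀ q ∈ Q, D q * Y = 0) (r : ℕ) :
    (∑ p, D p) ^ r * Y = (∑ p ∈ Qᶜ, D p) ^ r * Y := by
  rw [← sum_compl_add_sum Q D]
  exact add_pow_mul_of_mul_eq_zero (by rw [sum_mul]; exact sum_eq_zero hY) r

variable [Fintype ι] [DecidableEq ι]

theorem sum_pow_mul_eq_zero (hD : ∀ p, D p * D p = 0) {Q : Finset ι} {Y : R}
    (hY : ∀ q ∈ Q, D q * Y = 0) {r : ℕ} (hr : Fintype.card ι < r + #Q) :
    (∑ p, D p) ^ r * Y = 0 := by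
  have hQ := Q.card_le_univ
  rw [sum_pow_mul_eq_sum_compl_pow_mul D hY,
    sum_pow_eq_zero_of_card_lt D hD _ (by rw [card_compl]; omega), zero_mul]

theorem sum_pow_mul_mul_eq_zero (hD : ∀ p, D p * D p = 0) {Q : Finset ι} {Y : R}
    (hY : ∀ q ∈ Q, D q * Y = 0) {r : ℕ} (hr : Fintype.card ι ≤ r + #Q) (p : ι) :
    (∑ p, D p) ^ r * (D p * Y) = 0 := by
  by_cases hp : p ∈ Q
  · rw [hY p hp, mul_zero]
  refine sum_pow_mul_eq_zero D hD (Q := insert p Q) ?_ ?_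
  · intro q hq
    rcases mem_insert.1 hq with rfl | hq
    · rw [← mul_assoc, hD, zero_mul]
    · rw [mul_left_comm, hY q hq, mul_zero]
  · rw [card_insert_of_notMem hp]
    omega

theorem sum_pow_mul_prod (hD : ∀ p, D p * D p = 0) (Q : Finset ι) :
    (∑ p, D p) ^ (Fintype.card ι - #Q) * ∏ q ∈ Q, D q =
      (Fintype.card ι - #Q).factorial * ∏ p, D p := by
  have hQ : ∀ q ∈ Q, D q * ∏ p ∈ Q, D p = 0 := fun q hq => by
    rw [← mul_prod_erase Q D hq, ← mul_assoc, hD, zero_mul]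
  rw [sum_pow_mul_eq_sum_compl_pow_mul D hQ, ← card_compl, sum_pow_card D hD, mul_assoc,
    prod_compl_mul_prod]

theorem sum_pow_mul_prod_comp (hD : ∀ p, D p * D p = 0) {κ : Type*} [Fintype κ] [DecidableEq κ]
    (q : κ → ι) :
    (∑ p, D p) ^ (Fintype.card ι - Fintype.card κ) * ∏ l, D (q l) =
      if Function.Injective q then
        ((Fintype.card ι - Fintype.card κ).factorial : R) * ∏ p, D p
      else 0 := by
  split_ifs with hq
  · rw [← prod_image hq.injOn, ← card_univ (α := κ), ← card_image_of_injective univ hq,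
      sum_pow_mul_prod D hD]
  · obtain ⟨a, b, hab, hne⟩ : ∃ a b, q a = q b ∧ a ≠ b := by
      simpa [Function.Injective] using hq
    rw [← mul_prod_erase univ _ (mem_univ a),
      ← mul_prod_erase _ _ (mem_erase.2 ⟨hne.symm, mem_univ b⟩), hab, ← mul_assoc (D _), hD,
      zero_mul, mul_zero]

end SquareZero

section FinSums

variable {R : Type*} [CommRing R] {k : ℕ}

theorem sum_ite_eq_or_eq {i j : Fin k} (hij : i ≠ j) (a b : R) :
    ∑ m : Fin k, (if m = i ∨ m = j then a else b) = 2 * a + (k - 2) * b := by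
  have h : ∀ m, (if m = i ∨ m = j then a else b) =
      b + ((if m = i then a - b else 0) + (if m = j then a - b else 0)) := by
    intro m
    by_cases hi : m = i
    · subst hi; simp [hij]
    · by_cases hj : m = j
      · subst hj; simp [hi]
      · simp [hi, hj]
  simp only [h, sum_add_distrib, sum_ite_eq', mem_univ, if_true,
    sum_const, card_univ, Fintype.card_fin, nsmul_eq_mul]
  ring

theorem sum_sum_ite_eq_zero_else (c : R) :
    ∑ i : Fin k, ∑ j : Fin k, (if i = j then 0 else c) = k * (k - 1) * c := by
  have h : ∀ i j : Fin k, (if i = j then 0 else c) = c - if i = j then c else 0 := by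
    intro i j
    split_ifs <;> simp
  simp only [h, sum_sub_distrib, sum_ite_eq, mem_univ, if_true,
    sum_const, card_univ, Fintype.card_fin, nsmul_eq_mul]
  ring

end FinSums

open scoped IsMulCommutative

namespace ExteriorAlgebra

variable (R : Type*) {M : Type*} [CommRing R] [AddCommGroup M] [Module R M]

theorem ι_mul_ι_anticomm (a b : M) : ι R a * ι R b = -(ι R b * ι R a) :=
  eq_neg_of_add_eq_zero_left (ι_add_mul_swap a b)

theorem ι_mul_ι_mul_ι_anticomm (a b : M) (z : ExteriorAlgebra R M) :
    ι R a * (ι R b * z) = -(ι R b * (ι R a * z)) := by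
  rw [← mul_assoc, ι_mul_ι_anticomm, neg_mul, mul_assoc]

theorem ι_mul_ι_mul_self (a : M) (z : ExteriorAlgebra R M) : ι R a * (ι R a * z) = 0 := by
  rw [← mul_assoc, ι_sq_zero, zero_mul]

theorem ι_mul_ι_commute (a b c d : M) : Commute (ι R a * ι R b) (ι R c * ι R d) := by
  simp only [Commute, SemiconjBy, mul_assoc]
  rw [ι_mul_ι_mul_ι_anticomm R b c, mul_neg, ι_mul_ι_mul_ι_anticomm R a c, neg_neg,
    ι_mul_ι_anticomm R b d, mul_neg, mul_neg, ι_mul_ι_mul_ι_anticomm R a d, mul_neg, neg_neg]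

theorem ι_mul_ι_mul_ι_mul_ι_same_fst (a b d : M) :
    ι R a * ι R b * (ι R a * ι R d) = 0 := by
  rw [mul_assoc, ι_mul_ι_mul_ι_anticomm R b a, mul_neg, ι_mul_ι_mul_self, neg_zero]

theorem ι_mul_ι_mul_ι_mul_ι_same_snd (a b c : M) :
    ι R a * ι R b * (ι R c * ι R b) = 0 := by
  rw [mul_assoc, ι_mul_ι_anticomm R c b, mul_neg, mul_neg, ι_mul_ι_mul_self, mul_zero, neg_zero]

theorem ι_mul_ι_mul_ι_mul_ι_swap (a b c d : M) :
    ι R a * ι R b * (ι R c * ι R d) = -(ι R a * ι R d * (ι R c * ι R b)) := by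
  simp only [mul_assoc]
  rw [ι_mul_ι_mul_ι_anticomm R b c, mul_neg, ι_mul_ι_anticomm R b d, mul_neg, mul_neg, neg_neg,
    ι_mul_ι_mul_ι_anticomm R c d, mul_neg]

variable (M)

def bivectorSubalgebra : Subalgebra R (ExteriorAlgebra R M) :=
  Algebra.adjoin R (Set.range fun ab : M × M => ι R ab.1 * ι R ab.2)

instance : IsMulCommutative (bivectorSubalgebra R M) :=
  Algebra.isMulCommutative_adjoin R (by
    rintro _ ⟨⟨a, b⟩, rfl⟩ _ ⟨⟨c, d⟩, rfl⟩
    exact ι_mul_ι_commute R a b c d)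

variable {M}

def bivector (a b : M) : bivectorSubalgebra R M :=
  ⟨ι R a * ι R b, Algebra.subset_adjoin ⟨(a, b), rfl⟩⟩

theorem bivector_mul_bivector_same_fst (a b d : M) :
    bivector R a b * bivector R a d = 0 :=
  Subtype.ext (ι_mul_ι_mul_ι_mul_ι_same_fst R a b d)

theorem bivector_mul_bivector_same_snd (a b c : M) :
    bivector R a b * bivector R c b = 0 :=
  Subtype.ext (ι_mul_ι_mul_ι_mul_ι_same_snd R a b c)

theorem bivector_mul_bivector_swap (a b c d : M) :
    bivector R a b * bivector R c d = -(bivector R a d * bivector R c b) :=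
  Subtype.ext (ι_mul_ι_mul_ι_mul_ι_swap R a b c d)

end ExteriorAlgebra

namespace Fermion

open ExteriorAlgebra

abbrev Bil (k n : ℕ) := bivectorSubalgebra ℝ (V k n)

variable {k n : ℕ}

def bil (p q : Fin n × Fin k) : Bil k n :=
  bivector ℝ (Pi.single (Sum.inl p) 1) (Pi.single (Sum.inr q) 1)

theorem coe_bil (p q : Fin n × Fin k) :
    (bil p q : ExteriorAlgebra ℝ (V k n)) = ψ k n p.1 p.2 * ψb k n q.1 q.2 :=
  rfl

theorem bil_mul_bil_same_fst (p q q' : Fin n × Fin k) : bil p q * bil p q' = 0 :=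
  bivector_mul_bivector_same_fst ℝ _ _ _

theorem bil_mul_bil_same_snd (p p' q : Fin n × Fin k) : bil p q * bil p' q = 0 :=
  bivector_mul_bivector_same_snd ℝ _ _ _

theorem bil_mul_bil_swap (p q p' q' : Fin n × Fin k) :
    bil p q * bil p' q' = -(bil p q' * bil p' q) :=
  bivector_mul_bivector_swap ℝ _ _ _ _

theorem bil_self_mul_self (p : Fin n × Fin k) : bil p p * bil p p = 0 :=
  bil_mul_bil_same_fst p p p

variable (k n)

def ωBil (i j : Fin k) : Bil k n := ∑ s, bil (s, i) (s, j)

def trPhiBil : Bil k n := ∑ p, bil p p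

def TBil : Bil k n := ∏ p, bil p p

theorem coe_ωBil (i j : Fin k) : (ωBil k n i j : ExteriorAlgebra ℝ (V k n)) = ω k n i j := by
  simp only [ωBil, ω, AddSubmonoidClass.coe_finsetSum, coe_bil]

theorem coe_trPhiBil : (trPhiBil k n : ExteriorAlgebra ℝ (V k n)) = trPhi k n := by
  simp only [trPhiBil, trPhi, ω, AddSubmonoidClass.coe_finsetSum, coe_bil,
    Fintype.sum_prod_type]
  exact Finset.sum_comm

theorem coe_TBil : (TBil k n : ExteriorAlgebra ℝ (V k n)) = T k n := by
  rw [TBil, Fintype.prod_prod_type, Fin.prod_univ_def, T, ← Subalgebra.coe_val,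
    map_list_prod, List.map_map]
  congr 1
  refine List.map_congr_left fun s _ => ?_
  simp only [Function.comp_apply, Fin.prod_univ_def, map_list_prod, List.map_map]
  rfl

variable {k n}

theorem trPhiBil_pow_mul_bil_mul_eq_zero {i j : Fin k} (hij : i ≠ j) {s t : Fin n} (hst : s ≠ t)
    (p : Fin n × Fin k) (Y : Bil k n) :
    trPhiBil k n ^ (k * n - 4) * (bil p p * (Y * (bil (s, i) (s, j) * bil (t, j) (t, i)))) =
      0 := by
  refine sum_pow_mul_mul_eq_zero (fun p => bil p p) bil_self_mul_self
    (Q := {(s, i), (s, j), (t, i), (t, j)}) ?_ ?_ p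
  · intro q hq
    simp only [mem_insert, mem_singleton] at hq
    rcases hq with rfl | rfl | rfl | rfl
    · linear_combination (Y * bil (t, j) (t, i)) * bil_mul_bil_same_fst (s, i) (s, i) (s, j)
    · linear_combination (Y * bil (t, j) (t, i)) * bil_mul_bil_same_snd (s, j) (s, i) (s, j)
    · linear_combination (Y * bil (s, i) (s, j)) * bil_mul_bil_same_snd (t, i) (t, j) (t, i)
    · linear_combination (Y * bil (s, i) (s, j)) * bil_mul_bil_same_fst (t, j) (t, j) (t, i)
  · have hQ : #{(s, i), (s, j), (t, i), (t, j)} = 4 := by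
      rw [card_insert_of_notMem, card_insert_of_notMem, card_insert_of_notMem, card_singleton] <;>
        simp [hij, hst, hij.symm]
    rw [hQ, Fintype.card_prod, Fintype.card_fin, Fintype.card_fin, mul_comm]
    omega

theorem trPhiBil_pow_mul_prod_four (a b c d : Fin n × Fin k) :
    trPhiBil k n ^ (k * n - 4) * (bil a a * bil b b * bil c c * bil d d) =
      if Function.Injective ![a, b, c, d] then ((k * n - 4).factorial : ℝ) • TBil k n
      else 0 := by
  have h := sum_pow_mul_prod_comp (fun p => bil p p) bil_self_mul_self ![a, b, c, d]
  rw [Fin.prod_univ_four] at h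
  rwa [Fintype.card_prod, Fintype.card_fin, Fintype.card_fin, Fintype.card_fin, mul_comm n k,
    ← map_natCast (algebraMap ℝ (Bil k n)), ← Algebra.smul_def] at h

def freePairCount (n : ℕ) (m i j : Fin k) : ℝ :=
  if m = i ∨ m = j then ((n : ℝ) - 1) * (n - 2) else n * (n - 1)

theorem card_injective_pairs {i j : Fin k} (hij : i ≠ j) (m : Fin k) (s : Fin n) :
    (#{x : Fin n × Fin n | Function.Injective ![(x.1, m), (x.2, m), (s, i), (s, j)]} : ℝ) =
      freePairCount n m i j := by
  set A : Finset (Fin n) := {s' | (s', m) ≠ (s, i) ∧ (s', m) ≠ (s, j)}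
  have hpairs : ({x | Function.Injective ![(x.1, m), (x.2, m), (s, i), (s, j)]} :
      Finset (Fin n × Fin n)) = A.offDiag := by
    ext ⟨s₁, s₂⟩
    simp only [mem_filter, mem_univ, true_and, mem_offDiag]
    rw [Matrix.vecCons, Fin.cons_injective_iff, Matrix.vecCons, Fin.cons_injective_iff,
      Matrix.vecCons, Fin.cons_injective_iff]
    simp [A, Function.injective_of_subsingleton, hij]
    tauto
  rw [hpairs, offDiag_card, Nat.cast_sub (Nat.le_mul_self _), Nat.cast_mul, freePairCount]
  split_ifs with hm
  · have hA : A = univ.erase s := by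
      ext s'
      rcases hm with rfl | rfl <;> simp [A, hij, hij.symm]
    rw [hA, card_erase_of_mem (mem_univ s), card_univ, Fintype.card_fin, Nat.cast_sub s.pos]
    push_cast
    ring
  · have hA : A = univ := by
      ext s'
      simp only [A, mem_filter, mem_univ, true_and, iff_true, ne_eq, Prod.mk.injEq]
      tauto
    rw [hA, card_univ, Fintype.card_fin]
    ring

theorem trPhiBil_pow_mul_ωBil (m : Fin k) {i j : Fin k} (hij : i ≠ j) :
    trPhiBil k n ^ (k * n - 4) * ωBil k n m m * ωBil k n m m * ωBil k n i j * ωBil k n j i =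
      (-((k * n - 4).factorial * (n * freePairCount n m i j))) • TBil k n := by
  set P := trPhiBil k n ^ (k * n - 4) * ωBil k n m m * ωBil k n m m
  have hoff : ∀ s t, t ≠ s → P * (bil (s, i) (s, j) * bil (t, j) (t, i)) = 0 := by
    intro s t hts
    rw [mul_assoc, mul_assoc]
    nth_rewrite 1 [ωBil]
    rw [sum_mul, mul_sum]
    exact sum_eq_zero fun s' _ => trPhiBil_pow_mul_bil_mul_eq_zero hij hts.symm _ _
  have hdiag : ∀ s, P * (bil (s, i) (s, j) * bil (s, j) (s, i)) =
      (-((k * n - 4).factorial * freePairCount n m i j)) • TBil k n := by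
    intro s
    have hexp : P * (bil (s, i) (s, i) * bil (s, j) (s, j)) =
        ∑ x : Fin n × Fin n, trPhiBil k n ^ (k * n - 4) *
          (bil (x.1, m) (x.1, m) * bil (x.2, m) (x.2, m) * bil (s, i) (s, i) *
            bil (s, j) (s, j)) := by
      simp only [P, ωBil, sum_mul, mul_sum, mul_assoc, Fintype.sum_prod_type]
      exact sum_comm
    rw [bil_mul_bil_swap, mul_neg, hexp]
    simp only [trPhiBil_pow_mul_prod_four, sum_ite, sum_const_zero, add_zero, sum_const,
      ← Nat.cast_smul_eq_nsmul ℝ, card_injective_pairs hij, smul_smul, neg_smul]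
    rw [mul_comm]
  have hexp : ωBil k n i j * ωBil k n j i = ∑ s, ∑ t, bil (s, i) (s, j) * bil (t, j) (t, i) :=
    sum_mul_sum _ _ _ _
  rw [mul_assoc P, hexp, mul_sum, sum_congr rfl fun s _ =>
      (mul_sum _ _ _).trans (sum_eq_single s (fun t _ => hoff s t) (by simp)),
    sum_congr rfl fun s _ => hdiag s, sum_const, card_univ, Fintype.card_fin,
    ← Nat.cast_smul_eq_nsmul ℝ, smul_smul]
  congr 1
  ring

theorem sum_freePairCount {i j : Fin k} (hij : i ≠ j) :
    ∑ m, freePairCount n m i j = 2 * ((n - 1) * (n - 2)) + (k - 2) * (n * (n - 1)) :=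
  sum_ite_eq_or_eq hij _ _

theorem trPhi_pow_mul_ω (m : Fin k) {i j : Fin k} (hij : i ≠ j) :
    trPhi k n ^ (k * n - 4) * ω k n m m * ω k n m m * ω k n i j * ω k n j i =
      (-((k * n - 4).factorial * (n * freePairCount n m i j))) • T k n := by
  have h := congrArg Subtype.val (trPhiBil_pow_mul_ωBil (n := n) m hij)
  simpa only [Subalgebra.coe_mul, SubmonoidClass.coe_pow, coe_trPhiBil, coe_ωBil, coe_TBil,
    Subalgebra.coe_smul] using h

end Fermion


theorem Q2_eval_general (k n : ℕ) :
    (2 : ℝ) • (∑ m : Fin k, ∑ i : Fin k, ∑ j : Fin k,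
        if i = j then 0 else
          (trPhi k n) ^ (k * n - 4) * ω k n m m * ω k n m m * ω k n i j * ω k n j i) =
      (((k * n - 4).factorial : ℝ) * (k : ℝ) * (n : ℝ) * ((k : ℝ) - 1) *
        (-4 * ((n : ℝ) - 1) * ((n : ℝ) - 2)
          - 2 * (n : ℝ) * ((n : ℝ) - 1) * ((k : ℝ) - 2))) • T k n := by
  have hterm : ∀ m i j : Fin k, (if i = j then 0 else
      trPhi k n ^ (k * n - 4) * ω k n m m * ω k n m m * ω k n i j * ω k n j i) =
      (if i = j then 0 else
        -((k * n - 4).factorial * (n * Fermion.freePairCount n m i j))) • T k n := by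
    intro m i j
    split_ifs with h
    · rw [zero_smul]
    · exact Fermion.trPhi_pow_mul_ω m h
  have hm : ∀ i j : Fin k, ∑ m, (if i = j then 0 else
      -(((k * n - 4).factorial : ℝ) * (n * Fermion.freePairCount n m i j))) =
      if i = j then 0 else -(((k * n - 4).factorial : ℝ) *
        (n * (2 * ((n - 1) * (n - 2)) + (k - 2) * (n * (n - 1))))) := by
    intro i j
    split_ifs with h
    · exact sum_const_zero
    · rw [sum_neg_distrib, ← mul_sum, ← mul_sum, Fermion.sum_freePairCount h]
  simp only [hterm, ← sum_smul, smul_smul]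
  rw [sum_comm, sum_congr rfl fun i _ => sum_comm]
  simp only [hm, sum_sum_ite_eq_zero_else]
  congr 1
  ring

/-- `2 ∑_m ∑_{i≠j} (tr Φ)^{kn−4} ∧ ω^{mm} ∧ ω^{mm} ∧ ω^{ij} ∧ ω^{ji}
  = (kn−4)! · k · n · (k−1) · [−4(n−1)(n−2) − 2n(n−1)(k−2)] · T` (the term `Q₂`). -/
theorem Q2_eval (k N n : ℕ) (hk : 1 ≤ k) (hN : k < N) (hn : n = N - k)
    (hkn : 4 ≤ k * n) :
    (2 : ℝ) • (∑ m : Fin k, ∑ i : Fin k, ∑ j : Fin k,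
        if i = j then 0 else
          (trPhi k n) ^ (k * n - 4) * ω k n m m * ω k n m m * ω k n i j * ω k n j i) =
      (((k * n - 4).factorial : ℝ) * (k : ℝ) * (n : ℝ) * ((k : ℝ) - 1) *
        (-4 * ((n : ℝ) - 1) * ((n : ℝ) - 2)
          - 2 * (n : ℝ) * ((n : ℝ) - 1) * ((k : ℝ) - 2))) • T k n :=
  Q2_eval_general k n
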